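/- Let (L,E,R,∂₂,∂₁,{,}) be a 2-crossed module of commutative algebras. Define the algebra of 2-simplices A₂ = (R⋉E)⋉_{▶•}(E⋉L) and the three maps d₀(r,e,e',l) = (r,e), d₁(r,e,e',l) = (r, e+e'), d₂(r,e,e',l) = (r+∂₁(e), e'+∂₂(l)) into A₁ = R⋉E. Then d₀, d₁, d₂ are algebra homomorphisms. -/

import Mathlib

/-- An action of a commutative `k`-algebra `R` on a commutative `k`-algebra `M`:
a `k`-bilinear map satisfying `r▶(mm') = (r▶m)m' = m(r▶m')` and `(rr')▶m = r▶(r'▶m)`. -/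
structure AlgAction (k R M : Type*) [CommRing k] [CommRing R] [CommRing M]
    [Algebra k R] [Algebra k M] where
  act : R →ₗ[k] M →ₗ[k] M
  a1 : ∀ (r : R) (m m' : M), act r (m * m') = act r m * m'
  a1' : ∀ (r : R) (m m' : M), act r (m * m') = m * act r m'
  a2 : ∀ (r r' : R) (m : M), act (r * r') m = act r (act r' m)

/-- A 2-crossed module of commutative `k`-algebras, with Peiffer lifting `lift e e' = {e ⊗ e'}`.
The action `e ▶' l` of `E` on `L` is `lift e (d2 l)` (axiom 2XM5 is definitional). -/
structure TwoCrossedModule (k L E R : Type*) [CommRing k] [CommRing L] [CommRing E] [CommRing R]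
    [Algebra k L] [Algebra k E] [Algebra k R] where
  actE : AlgAction k R E
  actL : AlgAction k R L
  d2 : L →ₗ[k] E
  d1 : E →ₗ[k] R
  d2_mul : ∀ l l' : L, d2 (l * l') = d2 l * d2 l'
  d1_mul : ∀ e e' : E, d1 (e * e') = d1 e * d1 e'
  comp : ∀ l : L, d1 (d2 l) = 0
  d1_act : ∀ (r : R) (e : E), d1 (actE.act r e) = r * d1 e
  d2_act : ∀ (r : R) (l : L), d2 (actL.act r l) = actE.act r (d2 l)
  lift : E →ₗ[k] E →ₗ[k] L
  axm1 : ∀ e e' : E, d2 (lift e e') = e * e' - actE.act (d1 e') e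
  axm2 : ∀ l l' : L, lift (d2 l) (d2 l') = l * l'
  axm3 : ∀ e e' e'' : E, lift e (e' * e'') = lift (e * e') e'' + actL.act (d1 e'') (lift e e')
  axm4 : ∀ (l : L) (e : E), lift (d2 l) e = lift e (d2 l) - actL.act (d1 e) l
  axm6a : ∀ (r : R) (e e' : E), actL.act r (lift e e') = lift (actE.act r e) e'
  axm6b : ∀ (r : R) (e e' : E), actL.act r (lift e e') = lift e (actE.act r e')

namespace TwoCrossedModule

def face₁ (k : Type*) {R E L : Type*} [CommSemiring k] [AddCommMonoid R] [AddCommMonoid E]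
    [AddCommMonoid L] [Module k R] [Module k E] [Module k L] : (R × E) × (E × L) →ₗ[k] R × E where
  toFun p := (p.1.1, p.1.2 + p.2.1)
  map_add' _ _ := Prod.ext rfl (add_add_add_comm _ _ _ _)
  map_smul' c _ := Prod.ext rfl (smul_add c _ _).symm

variable {k L E R : Type*} [CommRing k] [CommRing L] [CommRing E] [CommRing R]
  [Algebra k L] [Algebra k E] [Algebra k R] (T : TwoCrossedModule k L E R)

def mul₁ (p q : R × E) : R × E :=
  (p.1 * q.1, T.actE.act p.1 q.2 + T.actE.act q.1 p.2 + p.2 * q.2)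

/-- `(r, e, e', l) ∈ A₂` is encoded as `((r, e), (e', l))`. -/
def mul₂ (p q : (R × E) × (E × L)) : (R × E) × (E × L) :=
  (T.mul₁ p.1 q.1,
    (p.1.2 * q.2.1 + T.actE.act p.1.1 q.2.1,
      T.actL.act (T.d1 p.1.2) q.2.2 + T.actL.act p.1.1 q.2.2 - T.lift q.2.1 p.1.2)
    + (q.1.2 * p.2.1 + T.actE.act q.1.1 p.2.1,
      T.actL.act (T.d1 q.1.2) p.2.2 + T.actL.act q.1.1 p.2.2 - T.lift p.2.1 q.1.2)
    + (p.2.1 * q.2.1, T.lift p.2.1 (T.d2 q.2.2) + T.lift q.2.1 (T.d2 p.2.2) + p.2.2 * q.2.2))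

def face₂ : (R × E) × (E × L) →ₗ[k] R × E where
  toFun p := (p.1.1 + T.d1 p.1.2, p.2.1 + T.d2 p.2.2)
  map_add' p q := by ext <;> simp only [Prod.fst_add, Prod.snd_add, map_add, add_add_add_comm]
  map_smul' c p := by
    ext <;> simp only [Prod.smul_fst, Prod.smul_snd, map_smul, smul_add, RingHom.id_apply]

theorem face₁_mul (p q : (R × E) × (E × L)) :
    face₁ k (T.mul₂ p q) = T.mul₁ (face₁ k p) (face₁ k q) := by
  obtain ⟨⟨r, e⟩, f, l⟩ := p
  obtain ⟨⟨r', e'⟩, f', l'⟩ := q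
  ext
  · rfl
  · simp only [face₁, mul₂, mul₁, LinearMap.coe_mk, AddHom.coe_mk, Prod.fst_add, map_add]
    ring

/-- On the `R`-component, `∂₁` is multiplicative and `R`-equivariant; on the `E`-component,
2XM1 turns each `∂₂ {e ⊗ e'}` into `e e' - ∂₁(e') ▶ e`, and `∂₁ ∂₂ = 0` kills the action
of `∂₁ (∂₂ l)`. -/
theorem face₂_mul (p q : (R × E) × (E × L)) :
    T.face₂ (T.mul₂ p q) = T.mul₁ (T.face₂ p) (T.face₂ q) := by
  obtain ⟨⟨r, e⟩, f, l⟩ := p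
  obtain ⟨⟨r', e'⟩, f', l'⟩ := q
  ext
  · simp only [face₂, mul₂, mul₁, LinearMap.coe_mk, AddHom.coe_mk, Prod.fst_add, Prod.snd_add,
      map_add, T.d1_act, T.d1_mul]
    ring
  · simp only [face₂, mul₂, mul₁, LinearMap.coe_mk, AddHom.coe_mk, Prod.fst_add, Prod.snd_add,
      map_add, map_sub, LinearMap.add_apply, T.d2_act, T.d2_mul, T.axm1,
      T.comp, map_zero, LinearMap.zero_apply]
    ring

end TwoCrossedModule

theorem stmt7 (k L E R : Type*) [CommRing k] [CommRing L] [CommRing E] [CommRing R]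
    [Algebra k L] [Algebra k E] [Algebra k R] (T : TwoCrossedModule k L E R) :
    ∀ (m1 : R × E → R × E → R × E)
      (mul2 : (R × E) × (E × L) → (R × E) × (E × L) → (R × E) × (E × L))
      (d0 d1 d2 : (R × E) × (E × L) → R × E),
      (m1 = fun p q => (p.1 * q.1, T.actE.act p.1 q.2 + T.actE.act q.1 p.2 + p.2 * q.2)) →
      (mul2 = fun p q => (m1 p.1 q.1,
        (p.1.2 * q.2.1 + T.actE.act p.1.1 q.2.1,
          T.actL.act (T.d1 p.1.2) q.2.2 + T.actL.act p.1.1 q.2.2 - T.lift q.2.1 p.1.2)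
        + (q.1.2 * p.2.1 + T.actE.act q.1.1 p.2.1,
          T.actL.act (T.d1 q.1.2) p.2.2 + T.actL.act q.1.1 p.2.2 - T.lift p.2.1 q.1.2)
        + (p.2.1 * q.2.1,
          T.lift p.2.1 (T.d2 q.2.2) + T.lift q.2.1 (T.d2 p.2.2) + p.2.2 * q.2.2))) →
      (d0 = fun p => p.1) →
      (d1 = fun p => (p.1.1, p.1.2 + p.2.1)) →
      (d2 = fun p => (p.1.1 + T.d1 p.1.2, p.2.1 + T.d2 p.2.2)) →
      ((∀ p q, d0 (p + q) = d0 p + d0 q) ∧ (∀ (c : k) p, d0 (c • p) = c • d0 p) ∧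
        (∀ p q, d0 (mul2 p q) = m1 (d0 p) (d0 q))) ∧
      ((∀ p q, d1 (p + q) = d1 p + d1 q) ∧ (∀ (c : k) p, d1 (c • p) = c • d1 p) ∧
        (∀ p q, d1 (mul2 p q) = m1 (d1 p) (d1 q))) ∧
      ((∀ p q, d2 (p + q) = d2 p + d2 q) ∧ (∀ (c : k) p, d2 (c • p) = c • d2 p) ∧
        (∀ p q, d2 (mul2 p q) = m1 (d2 p) (d2 q))) := by
  rintro m1 mul2 d0 d1 d2 rfl rfl rfl rfl rfl
  exact ⟨⟨fun _ _ => rfl, fun _ _ => rfl, fun _ _ => rfl⟩,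
    ⟨map_add (TwoCrossedModule.face₁ k), map_smul (TwoCrossedModule.face₁ k), T.face₁_mul⟩,
    ⟨map_add T.face₂, map_smul T.face₂, T.face₂_mul⟩⟩
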